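/- The integer solutions (x, y, z, w) ∈ ℤ⁴ of the equation x² + xz + y² + yw + 6z² + 6w² = 2 are exactly the four tuples (±1, ±1, 0, 0). In particular, this quaternary quadratic form represents 2 exactly 4 times. -/
import Mathlib

lemma key (x y z w : ℤ) :
    x ^ 2 + x * z + y ^ 2 + y * w + 6 * z ^ 2 + 6 * w ^ 2 = 2 ↔
      ((x = 1 ∨ x = -1) ∧ (y = 1 ∨ y = -1) ∧ z = 0 ∧ w = 0) := by
  constructor
  · intro h
    have h4 : (2*x+z)^2 + 23*z^2 + (2*y+w)^2 + 23*w^2 = 8 := by ring_nf; linarith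
    have hz : z = 0 := by nlinarith [sq_nonneg (2*x+z), sq_nonneg (2*y+w), sq_nonneg w, sq_nonneg z, sq_nonneg (z-1), sq_nonneg (z+1)]
    have hw : w = 0 := by nlinarith [sq_nonneg (2*x+z), sq_nonneg (2*y+w), sq_nonneg z, sq_nonneg (w-1), sq_nonneg (w+1)]
    subst hz hw
    have hxy : x^2 + y^2 = 2 := by linarith
    have hx1 : -1 ≤ x := by nlinarith [sq_nonneg y, sq_nonneg (x+1)]
    have hx2 : x ≤ 1 := by nlinarith [sq_nonneg y, sq_nonneg (x-1)]
    have hy1 : -1 ≤ y := by nlinarith [sq_nonneg x, sq_nonneg (y+1)]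
    have hy2 : y ≤ 1 := by nlinarith [sq_nonneg x, sq_nonneg (y-1)]
    interval_cases x <;> interval_cases y <;> omega
  · rintro ⟨hx | hx, hy | hy, hz, hw⟩ <;> subst hx hy hz hw <;> ring

/-- The integer solutions of `x² + xz + y² + yw + 6z² + 6w² = 2` are exactly the four
tuples `(±1, ±1, 0, 0)`; in particular this quaternary form represents `2` exactly
`4` times. -/
theorem stmt_7 :
    (∀ x y z w : ℤ,
      x ^ 2 + x * z + y ^ 2 + y * w + 6 * z ^ 2 + 6 * w ^ 2 = 2 ↔
        ((x = 1 ∨ x = -1) ∧ (y = 1 ∨ y = -1) ∧ z = 0 ∧ w = 0)) ∧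
    Set.ncard {p : ℤ × ℤ × ℤ × ℤ |
      p.1 ^ 2 + p.1 * p.2.2.1 + p.2.1 ^ 2 + p.2.1 * p.2.2.2 +
        6 * p.2.2.1 ^ 2 + 6 * p.2.2.2 ^ 2 = 2} = 4 := by
  refine ⟨key, ?_⟩
  have hset : {p : ℤ × ℤ × ℤ × ℤ |
      p.1 ^ 2 + p.1 * p.2.2.1 + p.2.1 ^ 2 + p.2.1 * p.2.2.2 +
        6 * p.2.2.1 ^ 2 + 6 * p.2.2.2 ^ 2 = 2} =
      ↑({(1,1,0,0), (1,-1,0,0), (-1,1,0,0), (-1,-1,0,0)} : Finset (ℤ × ℤ × ℤ × ℤ)) := by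
    ext ⟨x, y, z, w⟩
    simp only [Set.mem_setOf_eq, key, Finset.coe_insert, Set.mem_insert_iff,
      Finset.coe_singleton, Set.mem_singleton_iff, Prod.mk.injEq]
    tauto
  rw [hset, Set.ncard_coe_finset]
  decide
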